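/- For n ≥ 5 and 3 ≤ j < i ≤ n−1, deleting the final letter j from a member of C_{n,i,j} (and standardizing by decreasing all letters greater than j by 1) gives a bijection onto C_{n−1,i−1} := ⋃_{k≠i−1} C_{n−1,k,i−1}; hence c(n,i,j) = c(n−1,i−1) where c(n−1,i−1) := Σ_{k≠i−1} c(n−1,k,i−1). -/

import Mathlib

open List

/-- `w` is a linear permutation of `[n] = {1,…,n}` written in one-line notation. -/
def IsPermOf (n : ℕ) (w : List ℕ) : Prop :=
  w.Perm ((List.range n).map (· + 1))

/-- occurrence of the vincular pattern 1̄2̄3 : positions a, a+1, c with c > a+1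
forming an increasing triple. -/
def Occ123 (w : List ℕ) : Prop :=
  ∃ a c, a + 1 < c ∧ c < w.length ∧
    w.getD a 0 < w.getD (a + 1) 0 ∧ w.getD (a + 1) 0 < w.getD c 0

/-- occurrence of the vincular pattern 41\overline{23} : positions a < b < c (and c+1)
with w_b < w_c < w_{c+1} < w_a. -/
def Occ4123 (w : List ℕ) : Prop :=
  ∃ a b c, a < b ∧ b < c ∧ c + 1 < w.length ∧
    w.getD b 0 < w.getD c 0 ∧ w.getD c 0 < w.getD (c + 1) 0 ∧
    w.getD (c + 1) 0 < w.getD a 0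

/-- occurrence of the vincular pattern 1\overline{23} : positions a < b (and b+1)
forming an increasing triple. -/
def Occ1_23 (w : List ℕ) : Prop :=
  ∃ a b, a < b ∧ b + 1 < w.length ∧
    w.getD a 0 < w.getD b 0 ∧ w.getD b 0 < w.getD (b + 1) 0

/-- occurrence of the vincular pattern \overline{23}41 : positions a, a+1, c, d with
a+1 < c < d and w_d < w_a < w_{a+1} < w_c. -/
def Occ2341 (w : List ℕ) : Prop :=
  ∃ a c d, a + 1 < c ∧ c < d ∧ d < w.length ∧
    w.getD d 0 < w.getD a 0 ∧ w.getD a 0 < w.getD (a + 1) 0 ∧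
    w.getD (a + 1) 0 < w.getD c 0

/-- a circular permutation (represented by any linear reading `w`) avoids
\overline{23}41 iff no cyclic rotation of `w` contains it. -/
def CircAvoids2341 (w : List ℕ) : Prop := ∀ k, ¬ Occ2341 (w.rotate k)

/-- the set `L_n` of linear permutations of `[n]` avoiding both 1̄2̄3 and 41\overline{23}. -/
def Lset (n : ℕ) : Set (List ℕ) :=
  {w | IsPermOf n w ∧ ¬ Occ123 w ∧ ¬ Occ4123 w}

/-- the permutation (n−1)(n−2)⋯1 n. -/
def excludedPerm (n : ℕ) : List ℕ :=
  ((List.range (n - 1)).map (· + 1)).reverse ++ [n]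

/-- `L_n^* = L_n \ {(n−1)(n−2)⋯1n}`. -/
def Lstar (n : ℕ) : Set (List ℕ) := Lset n \ {excludedPerm n}

/-- `B_n`: members of `L_n^*` in which 1 occurs to the right of n. -/
def Bset (n : ℕ) : Set (List ℕ) :=
  {w ∈ Lstar n | w.idxOf n < w.idxOf 1}

/-- `C_n`: members of `L_n^*` in which 1 occurs to the left of n and 2 to its right. -/
def Cset (n : ℕ) : Set (List ℕ) :=
  {w ∈ Lstar n | w.idxOf 1 < w.idxOf n ∧ w.idxOf n < w.idxOf 2}

/-- members of `B_n` ending in the two letters i, j. -/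
def Bnij (n i j : ℕ) : Set (List ℕ) :=
  {w ∈ Bset n | ∃ u, w = u ++ [i, j]}

/-- members of `C_n` ending in the two letters i, j. -/
def Cnij (n i j : ℕ) : Set (List ℕ) :=
  {w ∈ Cset n | ∃ u, w = u ++ [i, j]}

noncomputable def bcount (n i j : ℕ) : ℕ := (Bnij n i j).ncard
noncomputable def ccount (n i j : ℕ) : ℕ := (Cnij n i j).ncard

/-- `b(n,j)`: the number of members of `B_n` ending in the letter j. -/
noncomputable def bLast (n j : ℕ) : ℕ := Set.ncard {w ∈ Bset n | ∃ u, w = u ++ [j]}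

/-- `c(n,j)`: the number of members of `C_n` ending in the letter j. -/
noncomputable def cLast (n j : ℕ) : ℕ := Set.ncard {w ∈ Cset n | ∃ u, w = u ++ [j]}

/-- `V_n`: linear permutations of `[n]` avoiding both 1̄2̄3 and 1\overline{23}. -/
def Vset (n : ℕ) : Set (List ℕ) :=
  {w | IsPermOf n w ∧ ¬ Occ123 w ∧ ¬ Occ1_23 w}

/-- `v(n,j)`: the number of members of `V_n` ending in the letter j. -/
noncomputable def vcount (n j : ℕ) : ℕ := Set.ncard {w ∈ Vset n | ∃ u, w = u ++ [j]}

/-- deletion of the final letter followed by standardization at level `j`. -/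
def delStd (j : ℕ) (w : List ℕ) : List ℕ :=
  w.dropLast.map (fun x => if j < x then x - 1 else x)

/-!
Appending the letter `j` and shifting every letter `≥ j` up by one (`appendShift j`) inverts
`delStd j`. The shift is strictly monotone, so pattern occurrences correspond, except possibly
those using the appended final `j`; these are harmless because the letter before it, `i`, exceeds
`j`: an occurrence of `41\overline{23}` would need the final pair to increase, and an occurrence
of `1̄2̄3` ending at `j` can be made to end at `i` instead. As `j ≥ 3`, the letters `1`, `2` and the
largest letter keep their positions. The count follows by sorting the members of `C_{n-1}` ending
in `i - 1` by their penultimate letter.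
-/

def shiftUp (j y : ℕ) : ℕ := if j ≤ y then y + 1 else y

def appendShift (j : ℕ) (v : List ℕ) : List ℕ := v.map (shiftUp j) ++ [j]

section shiftUp

variable {j x y : ℕ}

lemma strictMono_shiftUp (j : ℕ) : StrictMono (shiftUp j) := by
  intro x y h
  unfold shiftUp
  split_ifs <;> omega

lemma shiftUp_ne (j y : ℕ) : shiftUp j y ≠ j := by
  unfold shiftUp
  split_ifs <;> omega

lemma shiftUp_of_lt (h : y < j) : shiftUp j y = y := if_neg (by omega)

lemma shiftUp_of_le (h : j ≤ y) : shiftUp j y = y + 1 := if_pos h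

lemma exists_shiftUp_eq (h : x ≠ j) : ∃ y, shiftUp j y = x :=
  ⟨if j < x then x - 1 else x, by unfold shiftUp; split_ifs <;> omega⟩

end shiftUp

lemma delStd_appendShift (j : ℕ) (v : List ℕ) : delStd j (appendShift j v) = v := by
  simp only [delStd, appendShift, dropLast_concat, map_map]
  refine map_id'' (fun y => ?_) v
  simp only [Function.comp, shiftUp]
  split_ifs <;> omega

lemma appendShift_delStd {j : ℕ} {p : List ℕ} (hj : j ∉ p) :
    appendShift j (delStd j (p ++ [j])) = p ++ [j] := by
  simp only [delStd, appendShift, dropLast_concat, map_map]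
  congr 1
  refine (map_congr_left fun x hx => ?_).trans (map_id p)
  have : x ≠ j := fun h => hj (h ▸ hx)
  simp only [Function.comp, shiftUp, id]
  split_ifs <;> omega

lemma appendShift_append_singleton {j k : ℕ} (h : j ≤ k) (u : List ℕ) :
    appendShift j (u ++ [k]) = u.map (shiftUp j) ++ [k + 1, j] := by
  simp [appendShift, shiftUp_of_le h]

lemma idxOf_map_of_injective {α β : Type*} [DecidableEq α] [DecidableEq β]
    {f : α → β} (hf : f.Injective) (l : List α) (a : α) :
    (l.map f).idxOf (f a) = l.idxOf a := by
  induction l with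
  | nil => rfl
  | cons b l ih => simp [idxOf_cons, hf.eq_iff, ih, cond_eq_ite]

lemma exists_appendShift_eq_iff {j k : ℕ} (h : j ≤ k) (v : List ℕ) :
    (∃ u', appendShift j v = u' ++ [k + 1, j]) ↔ ∃ u, v = u ++ [k] := by
  have hinj := (strictMono_shiftUp j).injective
  rw [← shiftUp_of_le h]
  simp only [appendShift, ← singleton_append (l := [j]), ← append_assoc, append_cancel_right_eq]
  constructor
  · rintro ⟨u', hu'⟩
    obtain ⟨u, l, rfl, -, hl⟩ := map_eq_append_iff.1 hu'
    obtain ⟨y, rfl, hy⟩ := map_eq_singleton_iff.1 hl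
    exact ⟨u, by rw [hinj hy]⟩
  · rintro ⟨u, rfl⟩
    exact ⟨u.map (shiftUp j), by simp⟩

lemma getD_map_of_lt {f : ℕ → ℕ} {l : List ℕ} {k : ℕ} (hk : k < l.length) :
    (l.map f).getD k 0 = f (l.getD k 0) := by
  rw [getD_eq_getElem _ _ (by simpa using hk), getD_eq_getElem _ _ hk, getElem_map]

section Patterns

variable {f : ℕ → ℕ} {l w : List ℕ} {x y : ℕ}

lemma occ123_map_iff (hf : StrictMono f) : Occ123 (w.map f) ↔ Occ123 w := by
  unfold Occ123
  refine exists₂_congr fun a c => ?_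
  rw [length_map]
  refine and_congr_right fun hac => and_congr_right fun hc => ?_
  rw [getD_map_of_lt (by omega), getD_map_of_lt (by omega), getD_map_of_lt hc,
    hf.lt_iff_lt, hf.lt_iff_lt]

lemma occ4123_map_iff (hf : StrictMono f) : Occ4123 (w.map f) ↔ Occ4123 w := by
  unfold Occ4123
  refine exists₃_congr fun a b c => ?_
  rw [length_map]
  refine and_congr_right fun hab => and_congr_right fun hbc => and_congr_right fun hc => ?_
  rw [getD_map_of_lt (by omega), getD_map_of_lt (by omega), getD_map_of_lt (by omega),
    getD_map_of_lt (by omega), hf.lt_iff_lt, hf.lt_iff_lt, hf.lt_iff_lt]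

lemma Occ123.append (h : Occ123 w) (l : List ℕ) : Occ123 (w ++ l) := by
  obtain ⟨a, c, hac, hc, h₁, h₂⟩ := h
  refine ⟨a, c, hac, by rw [length_append]; omega, ?_⟩
  rw [getD_append _ _ _ _ hc, getD_append _ _ _ _ (by omega), getD_append _ _ _ _ (by omega)]
  exact ⟨h₁, h₂⟩

lemma Occ4123.append (h : Occ4123 w) (l : List ℕ) : Occ4123 (w ++ l) := by
  obtain ⟨a, b, c, hab, hbc, hc, h₁, h₂, h₃⟩ := h
  refine ⟨a, b, c, hab, hbc, by rw [length_append]; omega, ?_⟩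
  rw [getD_append _ _ _ _ hc, getD_append _ _ _ _ (by omega), getD_append _ _ _ _ (by omega),
    getD_append _ _ _ _ (by omega)]
  exact ⟨h₁, h₂, h₃⟩

lemma occ123_append_pair_iff (hxy : x < y) : Occ123 (l ++ [y, x]) ↔ Occ123 (l ++ [y]) := by
  refine ⟨fun ⟨a, c, hac, hc, h₁, h₂⟩ => ?_, fun h => by simpa using h.append [x]⟩
  have hget : ∀ k < l.length + 1, (l ++ [y, x]).getD k 0 = (l ++ [y]).getD k 0 := fun k hk => by
    rw [← singleton_append, ← append_assoc, getD_append _ _ _ _ (by simpa using hk)]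
  simp only [length_append, length_cons, length_nil] at hc
  rcases Nat.lt_or_ge c (l.length + 1) with hcl | hcl
  · rw [hget _ (by omega), hget _ (by omega)] at h₁
    rw [hget _ (by omega), hget _ hcl] at h₂
    exact ⟨a, c, hac, by simpa using hcl, h₁, h₂⟩
  · have hy : (l ++ [y, x]).getD l.length 0 = y := by simp
    have hx : (l ++ [y, x]).getD (l.length + 1) 0 = x := by simp
    obtain rfl : c = l.length + 1 := by omega
    rw [hx] at h₂
    rcases Nat.lt_or_ge (a + 1) l.length with hal | hal
    · rw [hget _ (by omega), hget _ (by omega)] at h₁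
      rw [hget _ (by omega)] at h₂
      refine ⟨a, l.length, hal, by simp, h₁, ?_⟩
      rw [← hget l.length (by omega), hy]
      omega
    · rw [show a + 1 = l.length by omega, hy] at h₂
      omega

lemma occ4123_append_pair_iff (hxy : x < y) : Occ4123 (l ++ [y, x]) ↔ Occ4123 (l ++ [y]) := by
  refine ⟨fun ⟨a, b, c, hab, hbc, hc, h₁, h₂, h₃⟩ => ?_, fun h => by simpa using h.append [x]⟩
  have hget : ∀ k < l.length + 1, (l ++ [y, x]).getD k 0 = (l ++ [y]).getD k 0 := fun k hk => by
    rw [← singleton_append, ← append_assoc, getD_append _ _ _ _ (by simpa using hk)]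
  simp only [length_append, length_cons, length_nil] at hc
  rcases Nat.lt_or_ge (c + 1) (l.length + 1) with hcl | hcl
  · rw [hget _ (by omega), hget _ (by omega)] at h₁
    rw [hget _ (by omega), hget _ hcl] at h₂
    rw [hget _ hcl, hget _ (by omega)] at h₃
    exact ⟨a, b, c, hab, hbc, by simpa using hcl, h₁, h₂, h₃⟩
  · obtain rfl : c = l.length := by omega
    have hy : (l ++ [y, x]).getD l.length 0 = y := by simp
    have hx : (l ++ [y, x]).getD (l.length + 1) 0 = x := by simp
    rw [hy, hx] at h₂
    omega

end Patterns

lemma isPermOf_iff {n : ℕ} {w : List ℕ} :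
    IsPermOf n w ↔ w.Nodup ∧ ∀ x, x ∈ w ↔ 1 ≤ x ∧ x ≤ n := by
  have hbase : ∀ x, x ∈ (range n).map (· + 1) ↔ 1 ≤ x ∧ x ≤ n := fun x => by
    simp only [mem_map, mem_range]
    exact ⟨by rintro ⟨a, ha, rfl⟩; omega, fun h => ⟨x - 1, by omega, by omega⟩⟩
  have hnodup : ((range n).map (· + 1)).Nodup := nodup_range.map (add_left_injective 1)
  refine ⟨fun h => ⟨h.nodup_iff.2 hnodup, fun x => by rw [h.mem_iff, hbase]⟩, fun ⟨hw, hmem⟩ => ?_⟩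
  exact (perm_ext_iff_of_nodup hw hnodup).2 fun x => by rw [hmem, hbase]

lemma IsPermOf.nodup {n : ℕ} {w : List ℕ} (h : IsPermOf n w) : w.Nodup :=
  (isPermOf_iff.1 h).1

lemma isPermOf_appendShift_iff {m j : ℕ} (hj₁ : 1 ≤ j) (hjm : j ≤ m + 1) {v : List ℕ} :
    IsPermOf (m + 1) (appendShift j v) ↔ IsPermOf m v := by
  have hinj := (strictMono_shiftUp j).injective
  have hrange : ∀ y, (1 ≤ shiftUp j y ∧ shiftUp j y ≤ m + 1) ↔ (1 ≤ y ∧ y ≤ m) := fun y => by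
    unfold shiftUp
    split_ifs <;> omega
  have hmem : ∀ y, shiftUp j y ∈ appendShift j v ↔ y ∈ v := fun y => by
    simp [appendShift, hinj.eq_iff, shiftUp_ne]
  rw [isPermOf_iff, isPermOf_iff]
  refine and_congr ?_ ⟨fun h y => by rw [← hmem, h, hrange], fun h x => ?_⟩
  · simp [appendShift, nodup_append, nodup_map_iff hinj, shiftUp_ne]
  · rcases eq_or_ne x j with rfl | hx
    · exact iff_of_true (by simp [appendShift]) ⟨hj₁, hjm⟩
    · obtain ⟨y, rfl⟩ := exists_shiftUp_eq hx
      rw [hmem, h, hrange]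

lemma mem_Cset {n : ℕ} {w : List ℕ} : w ∈ Cset n ↔
    (IsPermOf n w ∧ ¬Occ123 w ∧ ¬Occ4123 w) ∧ w ≠ excludedPerm n ∧
    w.idxOf 1 < w.idxOf n ∧ w.idxOf n < w.idxOf 2 := by
  simp only [Cset, Lstar, Lset, Set.mem_ofPred_eq, Set.mem_sdiff, Set.mem_singleton_iff, and_assoc]

lemma append_singleton_ne_excludedPerm {n a : ℕ} (h : a ≠ n) (l : List ℕ) :
    l ++ [a] ≠ excludedPerm n := by
  simp [excludedPerm, h]

lemma idxOf_appendShift {j y : ℕ} {v : List ℕ} (hy : y ∈ v) :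
    (appendShift j v).idxOf (shiftUp j y) = v.idxOf y := by
  rw [appendShift, idxOf_append_of_mem (mem_map_of_mem hy),
    idxOf_map_of_injective (strictMono_shiftUp j).injective]

lemma appendShift_mem_Cset_iff {m j k : ℕ} (hj : 3 ≤ j) (hjk : j ≤ k) (hkm : k < m)
    (u : List ℕ) : appendShift j (u ++ [k]) ∈ Cset (m + 1) ↔ u ++ [k] ∈ Cset m := by
  have hmono := strictMono_shiftUp j
  have hperm := isPermOf_appendShift_iff (v := u ++ [k]) (by omega) (by omega : j ≤ m + 1)
  have h123 : Occ123 (appendShift j (u ++ [k])) ↔ Occ123 (u ++ [k]) := by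
    rw [appendShift_append_singleton hjk, occ123_append_pair_iff (by omega),
      ← occ123_map_iff (w := u ++ [k]) hmono, map_append, map_singleton, shiftUp_of_le hjk]
  have h4123 : Occ4123 (appendShift j (u ++ [k])) ↔ Occ4123 (u ++ [k]) := by
    rw [appendShift_append_singleton hjk, occ4123_append_pair_iff (by omega),
      ← occ4123_map_iff (w := u ++ [k]) hmono, map_append, map_singleton, shiftUp_of_le hjk]
  have hw_ne : appendShift j (u ++ [k]) ≠ excludedPerm (m + 1) :=
    append_singleton_ne_excludedPerm (by omega) _
  have hv_ne : u ++ [k] ≠ excludedPerm m := append_singleton_ne_excludedPerm (by omega) _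
  simp only [mem_Cset, hperm, h123, h4123, hw_ne, hv_ne, ne_eq, not_false_eq_true, true_and]
  refine and_congr_right fun ⟨hv, _, _⟩ => ?_
  have hmem : ∀ y, 1 ≤ y → y ≤ m → y ∈ u ++ [k] := fun y h₁ h₂ =>
    ((isPermOf_iff.1 hv).2 y).2 ⟨h₁, h₂⟩
  have h₁ := idxOf_appendShift (j := j) (hmem 1 le_rfl (by omega))
  have h₂ := idxOf_appendShift (j := j) (hmem 2 (by omega) (by omega))
  have hm := idxOf_appendShift (j := j) (hmem m (by omega) le_rfl)
  rw [shiftUp_of_lt (by omega)] at h₁ h₂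
  rw [shiftUp_of_le (by omega)] at hm
  rw [h₁, h₂, hm]

lemma appendShift_mem_Cnij_iff {m j k : ℕ} (hj : 3 ≤ j) (hjk : j ≤ k) (hkm : k < m)
    (v : List ℕ) :
    appendShift j v ∈ Cnij (m + 1) (k + 1) j ↔ v ∈ {v ∈ Cset m | ∃ u, v = u ++ [k]} := by
  simp only [Cnij, Set.mem_ofPred_eq, exists_appendShift_eq_iff hjk]
  refine ⟨fun ⟨hw, u, hv⟩ => ?_, fun ⟨hv, u, hvu⟩ => ?_⟩
  · subst hv
    exact ⟨(appendShift_mem_Cset_iff hj hjk hkm u).1 hw, u, rfl⟩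
  · subst hvu
    exact ⟨(appendShift_mem_Cset_iff hj hjk hkm u).2 hv, u, rfl⟩

lemma appendShift_delStd_of_mem_Cnij {n i j : ℕ} {w : List ℕ} (hw : w ∈ Cnij n i j) :
    appendShift j (delStd j w) = w := by
  obtain ⟨⟨⟨⟨hperm, -⟩, -⟩, -⟩, u, rfl⟩ := hw
  rw [← singleton_append, ← append_assoc] at hperm ⊢
  exact appendShift_delStd fun h =>
    (nodup_append.1 hperm.nodup).2.2 j h j (mem_singleton_self j) rfl

lemma bijOn_delStd {m j k : ℕ} (hj : 3 ≤ j) (hjk : j ≤ k) (hkm : k < m) :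
    Set.BijOn (delStd j) (Cnij (m + 1) (k + 1) j) {v ∈ Cset m | ∃ u, v = u ++ [k]} := by
  have hinv : ∀ w ∈ Cnij (m + 1) (k + 1) j, appendShift j (delStd j w) = w :=
    fun w hw => appendShift_delStd_of_mem_Cnij hw
  refine Set.InvOn.bijOn (f' := appendShift j) ⟨hinv, fun v _ => delStd_appendShift j v⟩
    (fun w hw => ?_) (fun v hv => (appendShift_mem_Cnij_iff hj hjk hkm v).2 hv)
  rw [← appendShift_mem_Cnij_iff hj hjk hkm, hinv w hw]
  exact hw

lemma finite_Cset (m : ℕ) : (Cset m).Finite := by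
  refine (List.finite_toSet ((range m).map (· + 1)).permutations).subset fun w hw => ?_
  simpa [mem_permutations, IsPermOf] using hw.1.1.1

lemma disjoint_Cnij {m k k' a : ℕ} (h : k ≠ k') : Disjoint (Cnij m k a) (Cnij m k' a) := by
  refine Set.disjoint_left.2 fun w ⟨_, u, hu⟩ ⟨_, u', hu'⟩ => h ?_
  exact head_eq_of_cons_eq (append_inj' (hu.symm.trans hu') rfl).2

lemma setOf_Cset_endsWith_eq_biUnion (m a : ℕ) :
    {w ∈ Cset m | ∃ u, w = u ++ [a]} = ⋃ k ∈ ((Finset.Icc 1 m).erase a : Set ℕ), Cnij m k a := by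
  ext w
  simp only [Set.mem_ofPred_eq, Set.mem_iUnion, Finset.coe_erase, Set.mem_sdiff, Finset.coe_Icc,
    Set.mem_Icc, Set.mem_singleton_iff, exists_prop]
  refine ⟨fun ⟨hw, u₀, hu₀⟩ => ?_, fun ⟨k, _, hw, u, hu⟩ => ⟨hw, u ++ [k], by simp [hu]⟩⟩
  obtain ⟨⟨hperm, -⟩, -, h1m, hm2⟩ := mem_Cset.1 hw
  rcases eq_nil_or_concat' u₀ with rfl | ⟨u, k, rfl⟩
  · have := idxOf_le_length (a := 2) (l := [a])
    rw [hu₀, nil_append] at h1m hm2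
    simp only [length_singleton] at this
    omega
  · rw [append_assoc, singleton_append] at hu₀
    subst hu₀
    have hk : 1 ≤ k ∧ k ≤ m := ((isPermOf_iff.1 hperm).2 k).1 (by simp)
    have hka : k ≠ a := fun h =>
      (nodup_cons.1 (hperm.nodup.sublist (sublist_append_right u _))).1 (by simp [h])
    exact ⟨k, ⟨hk, hka⟩, hw, u, rfl⟩

lemma ncard_Cset_endsWith (m a : ℕ) :
    {w ∈ Cset m | ∃ u, w = u ++ [a]}.ncard = ∑ k ∈ (Finset.Icc 1 m).erase a, ccount m k a := by
  rw [setOf_Cset_endsWith_eq_biUnion, Set.Finite.ncard_biUnion (Finset.finite_toSet _)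
    (fun k _ => (finite_Cset m).subset fun _ hw => hw.1)
    (fun k _ k' _ h => disjoint_Cnij h), finsum_mem_coe_finset]
  rfl

theorem stmt8_general (n i j : ℕ) (hj : 3 ≤ j) (hji : j < i) (hi : i ≤ n - 1) :
    Set.BijOn (delStd j) (Cnij n i j) {w ∈ Cset (n - 1) | ∃ u, w = u ++ [i - 1]} ∧
    ccount n i j = ∑ k ∈ (Finset.Icc 1 (n - 1)).erase (i - 1), ccount (n - 1) k (i - 1) := by
  obtain ⟨m, rfl⟩ : ∃ m, n = m + 1 := ⟨n - 1, by omega⟩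
  obtain ⟨k, rfl⟩ : ∃ k, i = k + 1 := ⟨i - 1, by omega⟩
  simp only [Nat.add_sub_cancel] at hi ⊢
  have hbij := bijOn_delStd hj (by omega) (by omega : k < m)
  exact ⟨hbij, by rw [ccount, hbij.ncard_eq, ncard_Cset_endsWith]⟩

theorem stmt8 (n i j : ℕ) (hn : 5 ≤ n) (hj : 3 ≤ j) (hji : j < i) (hi : i ≤ n - 1) :
    Set.BijOn (delStd j) (Cnij n i j) {w ∈ Cset (n - 1) | ∃ u, w = u ++ [i - 1]} ∧
    ccount n i j = ∑ k ∈ (Finset.Icc 1 (n - 1)).erase (i - 1), ccount (n - 1) k (i - 1) :=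
  stmt8_general n i j hj hji hi
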